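/- Let h > 0, let Q = [a, a + 3h] × [b, b + 3h] ⊂ ℝ^2, and let Φ : Q → ℝ^2 be continuously differentiable. Then ∫_{Q × Q} |Φ(ξ, η) − Φ(s, t)|^2 dξ dη ds dt ≤ 162 h^4 ( ‖∂_1 Φ‖_{L^2(Q)}^2 + ‖∂_2 Φ‖_{L^2(Q)}^2 ). -/

import Mathlib

open MeasureTheory Set

/-! Join `p = (ξ, η)` to `q = (s, t)` through the corner `(s, η)`. On each of the two legs the
fundamental theorem of calculus and Cauchy–Schwarz bound the squared increment by the side length
times the squared `L²` norm of the partial derivative along that line. Integrating over `p` and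
`q` and applying Fubini gives `2 ℓ⁴ (‖∂₁Φ‖² + ‖∂₂Φ‖²)` on a square of side `ℓ`, and `2 · 3⁴ = 162`. -/

theorem sq_setIntegral_le_measureReal_mul {α : Type*} [MeasurableSpace α] {μ : Measure α}
    {t : Set α} {g : α → ℝ} (ht : μ t ≠ ⊤) (hg : IntegrableOn g t μ)
    (hg2 : IntegrableOn (fun x => g x ^ 2) t μ) :
    (∫ x in t, g x ∂μ) ^ 2 ≤ μ.real t * ∫ x in t, g x ^ 2 ∂μ := by
  rcases eq_or_ne (μ t) 0 with h0 | h0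
  · simp [Measure.restrict_eq_zero.2 h0]
  have jensen := (even_two.convexOn_pow (𝕜 := ℝ)).map_set_average_le (continuousOn_pow 2)
    isClosed_univ h0 ht (Filter.Eventually.of_forall fun _ => mem_univ _) hg hg2
  have hpos : 0 < μ.real t := ENNReal.toReal_pos h0 ht
  rw [setAverage_eq, setAverage_eq, smul_eq_mul, smul_eq_mul, mul_pow] at jensen
  field_simp at jensen
  nlinarith [jensen]

section Interval

variable {E : Type*} [NormedAddCommGroup E] [NormedSpace ℝ E] [CompleteSpace E]
  {c d : ℝ} {f f' : ℝ → E}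

theorem norm_sub_le_setIntegral_norm_of_hasDerivWithinAt
    (hf : ∀ x ∈ Icc c d, HasDerivWithinAt f (f' x) (Icc c d) x)
    (hf' : ContinuousOn f' (Icc c d)) {x y : ℝ} (hx : x ∈ Icc c d) (hy : y ∈ Icc c d) :
    ‖f x - f y‖ ≤ ∫ u in Icc c d, ‖f' u‖ := by
  wlog hyx : y ≤ x generalizing x y
  · rw [norm_sub_rev]
    exact this hy hx (le_of_not_ge hyx)
  have hsub : Icc y x ⊆ Icc c d := Icc_subset_Icc hy.1 hx.2
  have ftc : ∫ u in y..x, f' u = f x - f y := by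
    refine intervalIntegral.integral_eq_sub_of_hasDerivAt_of_le hyx
      (fun u hu => (hf u (hsub hu)).continuousWithinAt.mono hsub) (fun u hu => ?_)
      ((hf'.mono hsub).intervalIntegrable_of_Icc hyx)
    exact (hf u (Ioo_subset_Icc_self (Ioo_subset_Ioo hy.1 hx.2 hu))).hasDerivAt
      (Icc_mem_nhds (hy.1.trans_lt hu.1) (hu.2.trans_le hx.2))
  calc ‖f x - f y‖ = ‖∫ u in y..x, f' u‖ := by rw [ftc]
    _ ≤ ∫ u in Ioc y x, ‖f' u‖ := by
      rw [← intervalIntegral.integral_of_le hyx]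
      exact intervalIntegral.norm_integral_le_integral_norm hyx
    _ ≤ ∫ u in Icc c d, ‖f' u‖ :=
      setIntegral_mono_set (hf'.norm.integrableOn_compact isCompact_Icc)
        (Filter.Eventually.of_forall fun _ => norm_nonneg _)
        (Ioc_subset_Icc_self.trans hsub).eventuallyLE

theorem norm_sub_sq_le_mul_setIntegral_norm_sq_of_hasDerivWithinAt
    (hf : ∀ x ∈ Icc c d, HasDerivWithinAt f (f' x) (Icc c d) x)
    (hf' : ContinuousOn f' (Icc c d)) {x y : ℝ} (hx : x ∈ Icc c d) (hy : y ∈ Icc c d) :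
    ‖f x - f y‖ ^ 2 ≤ (d - c) * ∫ u in Icc c d, ‖f' u‖ ^ 2 := by
  calc ‖f x - f y‖ ^ 2 ≤ (∫ u in Icc c d, ‖f' u‖) ^ 2 := by
        gcongr
        exact norm_sub_le_setIntegral_norm_of_hasDerivWithinAt hf hf' hx hy
    _ ≤ volume.real (Icc c d) * ∫ u in Icc c d, ‖f' u‖ ^ 2 :=
      sq_setIntegral_le_measureReal_mul measure_Icc_lt_top.ne
        (hf'.norm.integrableOn_compact isCompact_Icc)
        ((hf'.norm.pow 2).integrableOn_compact isCompact_Icc)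
    _ = (d - c) * ∫ u in Icc c d, ‖f' u‖ ^ 2 := by
      rw [Real.volume_real_Icc_of_le (hx.1.trans hx.2)]

end Interval

theorem integral_integral_le_of_le_add {α : Type*} [MeasurableSpace α] {μ : Measure α}
    [IsFiniteMeasure μ] {f : α → α → ℝ} {A B : α → ℝ} (hf : ∀ p q, 0 ≤ f p q)
    (hA : Integrable A μ) (hB : Integrable B μ)
    (hle : ∀ᵐ p ∂μ, ∀ᵐ q ∂μ, f p q ≤ A p + B q) :
    ∫ p, ∫ q, f p q ∂μ ∂μ ≤ μ.real univ * (∫ p, A p ∂μ + ∫ q, B q ∂μ) := by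
  have inner : ∀ᵐ p ∂μ, ∫ q, f p q ∂μ ≤ μ.real univ * A p + ∫ q, B q ∂μ := by
    filter_upwards [hle] with p hp
    calc ∫ q, f p q ∂μ ≤ ∫ q, (A p + B q) ∂μ :=
          integral_mono_of_nonneg (.of_forall (hf p)) ((integrable_const _).add hB) hp
      _ = μ.real univ * A p + ∫ q, B q ∂μ := by
          rw [integral_add (integrable_const _) hB, integral_const, smul_eq_mul]
  calc ∫ p, ∫ q, f p q ∂μ ∂μ ≤ ∫ p, (μ.real univ * A p + ∫ q, B q ∂μ) ∂μ :=
        integral_mono_of_nonneg (.of_forall fun p => integral_nonneg (hf p))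
          ((hA.const_mul _).add (integrable_const _)) inner
    _ = μ.real univ * (∫ p, A p ∂μ + ∫ q, B q ∂μ) := by
        rw [integral_add (hA.const_mul _) (integrable_const _), integral_const_mul,
          integral_const, smul_eq_mul]
        ring

section Fubini

variable {α β : Type*} [MeasurableSpace α] [MeasurableSpace β] {μ : Measure α} {ν : Measure β}
  [SFinite μ] [SFinite ν] {k : α × β → ℝ}

theorem integral_prod_integral_fst_eq (hk : Integrable k (μ.prod ν)) :
    ∫ z, (∫ x, k (x, z.2) ∂μ) ∂μ.prod ν = μ.real univ * ∫ z, k z ∂μ.prod ν := by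
  rw [integral_fun_snd fun y => ∫ x, k (x, y) ∂μ, smul_eq_mul, integral_prod_symm _ hk]

theorem integral_prod_integral_snd_eq (hk : Integrable k (μ.prod ν)) :
    ∫ z, (∫ y, k (z.1, y) ∂ν) ∂μ.prod ν = ν.real univ * ∫ z, k z ∂μ.prod ν := by
  rw [integral_fun_fst fun x => ∫ y, k (x, y) ∂ν, smul_eq_mul, integral_prod _ hk]

end Fubini

section Rectangle

variable {E : Type*} [NormedAddCommGroup E] [NormedSpace ℝ E] [CompleteSpace E]
  {a a' b b' : ℝ} {Φ D1 D2 : ℝ × ℝ → E}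

theorem norm_sub_sq_le_of_hasDerivWithinAt_rectangle
    (hD1 : ∀ p ∈ Icc a a' ×ˢ Icc b b',
      HasDerivWithinAt (fun u => Φ (u, p.2)) (D1 p) (Icc a a') p.1)
    (hD2 : ∀ p ∈ Icc a a' ×ˢ Icc b b',
      HasDerivWithinAt (fun v => Φ (p.1, v)) (D2 p) (Icc b b') p.2)
    (hD1cont : ContinuousOn D1 (Icc a a' ×ˢ Icc b b'))
    (hD2cont : ContinuousOn D2 (Icc a a' ×ˢ Icc b b'))
    {p q : ℝ × ℝ} (hp : p ∈ Icc a a' ×ˢ Icc b b') (hq : q ∈ Icc a a' ×ˢ Icc b b') :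
    ‖Φ p - Φ q‖ ^ 2 ≤ 2 * (a' - a) * (∫ u in Icc a a', ‖D1 (u, p.2)‖ ^ 2)
      + 2 * (b' - b) * ∫ v in Icc b b', ‖D2 (q.1, v)‖ ^ 2 := by
  obtain ⟨ξ, η⟩ := p
  obtain ⟨s, t⟩ := q
  have horizontal : ‖Φ (ξ, η) - Φ (s, η)‖ ^ 2 ≤ (a' - a) * ∫ u in Icc a a', ‖D1 (u, η)‖ ^ 2 :=
    norm_sub_sq_le_mul_setIntegral_norm_sq_of_hasDerivWithinAt (f := fun u => Φ (u, η))
      (fun u hu => hD1 (u, η) ⟨hu, hp.2⟩)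
      (hD1cont.comp (by fun_prop) fun u hu => ⟨hu, hp.2⟩) hp.1 hq.1
  have vertical : ‖Φ (s, η) - Φ (s, t)‖ ^ 2 ≤ (b' - b) * ∫ v in Icc b b', ‖D2 (s, v)‖ ^ 2 :=
    norm_sub_sq_le_mul_setIntegral_norm_sq_of_hasDerivWithinAt (f := fun v => Φ (s, v))
      (fun v hv => hD2 (s, v) ⟨hq.1, hv⟩)
      (hD2cont.comp (by fun_prop) fun v hv => ⟨hq.1, hv⟩) hp.2 hq.2
  calc ‖Φ (ξ, η) - Φ (s, t)‖ ^ 2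
        ≤ (‖Φ (ξ, η) - Φ (s, η)‖ + ‖Φ (s, η) - Φ (s, t)‖) ^ 2 := by
        gcongr
        exact norm_sub_le_norm_sub_add_norm_sub _ _ _
    _ ≤ 2 * (‖Φ (ξ, η) - Φ (s, η)‖ ^ 2 + ‖Φ (s, η) - Φ (s, t)‖ ^ 2) := add_sq_le
    _ ≤ _ := by linarith

theorem integral_integral_norm_sub_sq_le_rectangle (ha : a ≤ a') (hb : b ≤ b')
    (hD1 : ∀ p ∈ Icc a a' ×ˢ Icc b b',
      HasDerivWithinAt (fun u => Φ (u, p.2)) (D1 p) (Icc a a') p.1)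
    (hD2 : ∀ p ∈ Icc a a' ×ˢ Icc b b',
      HasDerivWithinAt (fun v => Φ (p.1, v)) (D2 p) (Icc b b') p.2)
    (hD1cont : ContinuousOn D1 (Icc a a' ×ˢ Icc b b'))
    (hD2cont : ContinuousOn D2 (Icc a a' ×ˢ Icc b b')) :
    ∫ p in Icc a a' ×ˢ Icc b b', ∫ q in Icc a a' ×ˢ Icc b b', ‖Φ p - Φ q‖ ^ 2
      ≤ 2 * (a' - a) * (b' - b) * ((a' - a) ^ 2 * (∫ p in Icc a a' ×ˢ Icc b b', ‖D1 p‖ ^ 2)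
        + (b' - b) ^ 2 * ∫ p in Icc a a' ×ˢ Icc b b', ‖D2 p‖ ^ 2) := by
  have hQ : volume.restrict (Icc a a' ×ˢ Icc b b')
      = (volume.restrict (Icc a a')).prod (volume.restrict (Icc b b')) := by
    rw [Measure.prod_restrict, ← Measure.volume_eq_prod]
  have hD1sq : IntegrableOn (fun p => ‖D1 p‖ ^ 2) (Icc a a' ×ˢ Icc b b') :=
    (hD1cont.norm.pow 2).integrableOn_compact (isCompact_Icc.prod isCompact_Icc)
  have hD2sq : IntegrableOn (fun p => ‖D2 p‖ ^ 2) (Icc a a' ×ˢ Icc b b') :=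
    (hD2cont.norm.pow 2).integrableOn_compact (isCompact_Icc.prod isCompact_Icc)
  rw [IntegrableOn, hQ] at hD1sq hD2sq
  have hmem : ∀ᵐ p ∂volume.restrict (Icc a a' ×ˢ Icc b b'), p ∈ Icc a a' ×ˢ Icc b b' :=
    ae_restrict_mem (measurableSet_Icc.prod measurableSet_Icc)
  have : IsFiniteMeasure (volume.restrict (Icc a a' ×ˢ Icc b b')) :=
    isFiniteMeasure_restrict.2 (isCompact_Icc.prod isCompact_Icc).measure_lt_top.ne
  calc _ ≤ volume.real (Icc a a' ×ˢ Icc b b') *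
        ((∫ p in Icc a a' ×ˢ Icc b b', 2 * (a' - a) * ∫ u in Icc a a', ‖D1 (u, p.2)‖ ^ 2)
        + ∫ q in Icc a a' ×ˢ Icc b b', 2 * (b' - b) * ∫ v in Icc b b', ‖D2 (q.1, v)‖ ^ 2) := by
        rw [← measureReal_restrict_apply_univ]
        refine integral_integral_le_of_le_add (fun _ _ => sq_nonneg _) ?_ ?_ ?_
        · rw [hQ]
          exact hD1sq.integral_prod_right.comp_snd _ |>.const_mul _
        · rw [hQ]
          exact hD2sq.integral_prod_left.comp_fst _ |>.const_mul _
        · filter_upwards [hmem] with p hp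
          filter_upwards [hmem] with q hq
          exact norm_sub_sq_le_of_hasDerivWithinAt_rectangle hD1 hD2 hD1cont hD2cont hp hq
    _ = _ := by
        rw [integral_const_mul, integral_const_mul, hQ, integral_prod_integral_fst_eq hD1sq,
          integral_prod_integral_snd_eq hD2sq, measureReal_restrict_apply_univ,
          measureReal_restrict_apply_univ, Measure.volume_eq_prod, measureReal_prod_prod,
          Real.volume_real_Icc_of_le ha, Real.volume_real_Icc_of_le hb]
        ring

end Rectangle

/-- **Mean-oscillation estimate on a square of side `3h`.**
If `Φ : Q → ℝ²` is continuously differentiable on the square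
`Q = [a, a+3h] × [b, b+3h]` with partial derivatives `D1` and `D2`, then
`∫_{Q×Q} |Φ(ξ,η) - Φ(s,t)|² ≤ 162 h⁴ (‖D1‖²_{L²(Q)} + ‖D2‖²_{L²(Q)})`. -/
theorem mean_oscillation_square
    (h a b : ℝ) (hh : 0 < h)
    (Φ D1 D2 : ℝ × ℝ → EuclideanSpace ℝ (Fin 2))
    (hD1 : ∀ p ∈ Icc a (a + 3 * h) ×ˢ Icc b (b + 3 * h),
      HasDerivWithinAt (fun u => Φ (u, p.2)) (D1 p) (Icc a (a + 3 * h)) p.1)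
    (hD2 : ∀ p ∈ Icc a (a + 3 * h) ×ˢ Icc b (b + 3 * h),
      HasDerivWithinAt (fun v => Φ (p.1, v)) (D2 p) (Icc b (b + 3 * h)) p.2)
    (hD1cont : ContinuousOn D1 (Icc a (a + 3 * h) ×ˢ Icc b (b + 3 * h)))
    (hD2cont : ContinuousOn D2 (Icc a (a + 3 * h) ×ˢ Icc b (b + 3 * h))) :
    ∫ p in Icc a (a + 3 * h) ×ˢ Icc b (b + 3 * h),
      ∫ q in Icc a (a + 3 * h) ×ˢ Icc b (b + 3 * h), ‖Φ p - Φ q‖ ^ 2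
    ≤ 162 * h ^ 4 *
      ((∫ p in Icc a (a + 3 * h) ×ˢ Icc b (b + 3 * h), ‖D1 p‖ ^ 2)
        + ∫ p in Icc a (a + 3 * h) ×ˢ Icc b (b + 3 * h), ‖D2 p‖ ^ 2) := by
  have hside : ∀ c : ℝ, c ≤ c + 3 * h := fun c => by linarith
  refine (integral_integral_norm_sub_sq_le_rectangle (hside a) (hside b)
    hD1 hD2 hD1cont hD2cont).trans_eq ?_
  ring
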